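/- Let C ⊆ F_2^n be a neural code and D = ^cC. Then MaxMot(^c(C^[p])) = {\overline{\overline{b}^p} : b ∈ MaxMot(D)}, and this set is contained in MaxMot(^c(C^p)). -/

import Mathlib

open MvPolynomial

/-- The field with two elements. -/
abbrev F2 := ZMod 2

/-- A motif indexed by `ι`: at each index it is `0`, `1`, or `*` (represented by `none`). -/
abbrev Motif (ι : Type*) := ι → Option F2

/-- The partial order on motifs: `a ≤ b` iff `a i = b i` for every index `i` with `b i ≠ *`. -/
def MotifLE {ι : Type*} (a b : Motif ι) : Prop :=
  ∀ (i : ι) (x : F2), b i = some x → a i = some x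

/-- The variety of a motif: all words agreeing with the motif on its non-`*` coordinates. -/
def variety {ι : Type*} (a : Motif ι) : Set (ι → F2) :=
  {w | ∀ (i : ι) (x : F2), a i = some x → w i = x}

/-- `a` is a motif of the code `C` iff its variety is contained in `C`. -/
def IsMotifOf {ι : Type*} (C : Set (ι → F2)) (a : Motif ι) : Prop :=
  variety a ⊆ C

/-- The set of maximal motifs of a code `C`. -/
def maxMot {ι : Type*} (C : Set (ι → F2)) : Set (Motif ι) :=
  {a | IsMotifOf C a ∧ ∀ b : Motif ι, IsMotifOf C b → MotifLE a b → a = b}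

/-- Two motifs are disjoint if at some index both are non-`*` and they differ. -/
def DisjointMotifs {ι : Type*} (a b : Motif ι) : Prop :=
  ∃ (i : ι) (x : F2), a i = some x ∧ b i = some (1 - x)

/-- Polarization of a motif of length `n`, as a motif of length `2n`
(indexed by `Fin n ⊕ Fin n`; `Sum.inl i` is coordinate `i`, `Sum.inr i` is coordinate `n+i`). -/
def polMotif {n : ℕ} (a : Motif (Fin n)) : Motif (Fin n ⊕ Fin n)
  | Sum.inl i => if a i = some 0 then some 0 else none
  | Sum.inr i => if a i = some 1 then some 0 else none

/-- The bar of a motif: `0 ↦ 1`, `1 ↦ 0`, `* ↦ *`. -/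
def barMotif {ι : Type*} (a : Motif ι) : Motif ι :=
  fun i => (a i).map (fun x => 1 - x)

/-- The polarization of a code `C ⊆ F₂ⁿ`: the union of the varieties of the
polarizations of the maximal motifs of `C`. -/
def polCode {n : ℕ} (C : Set (Fin n → F2)) : Set ((Fin n ⊕ Fin n) → F2) :=
  ⋃ a ∈ maxMot C, variety (polMotif a)

/-- The code `over-over-D-p` : the union of the varieties of `bar (pol (bar b))`
over the maximal motifs `b` of `D`. -/
def barPolBarCode {n : ℕ} (D : Set (Fin n → F2)) : Set ((Fin n ⊕ Fin n) → F2) :=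
  ⋃ b ∈ maxMot D, variety (barMotif (polMotif (barMotif b)))

/-- The formal polarization of a code `C`: the complement of `barPolBarCode` of `Cᶜ`. -/
def formalPol {n : ℕ} (C : Set (Fin n → F2)) : Set ((Fin n ⊕ Fin n) → F2) :=
  (barPolBarCode Cᶜ)ᶜ

/-- The Lagrange polynomial of a motif. -/
noncomputable def lagrange {ι : Type*} [Fintype ι] (a : Motif ι) : MvPolynomial ι F2 :=
  (∏ i ∈ Finset.univ.filter (fun i => a i = some 1), X i) *
    ∏ j ∈ Finset.univ.filter (fun j => a j = some 0), (1 - X j)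

/-- The motif (with no stars) corresponding to a word. -/
def wordMotif {ι : Type*} (w : ι → F2) : Motif ι := fun i => some (w i)

/-- The neural ideal of a code: generated by the Lagrange polynomials of the
words in the complement of the code. -/
noncomputable def neuralIdeal {ι : Type*} [Fintype ι] (C : Set (ι → F2)) :
    Ideal (MvPolynomial ι F2) :=
  Ideal.span ((fun w => lagrange (wordMotif w)) '' Cᶜ)

/-- The pseudo-monomial `∏_{i ∈ σ} X i * ∏_{j ∈ τ} (1 - X j)`. -/
noncomputable def pm {ι : Type*} (σ τ : Finset ι) : MvPolynomial ι F2 :=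
  (∏ i ∈ σ, X i) * ∏ j ∈ τ, (1 - X j)

/-- A polynomial is a pseudo-monomial if it equals `pm σ τ` for disjoint `σ τ`. -/
def IsPseudoMonomial {ι : Type*} (f : MvPolynomial ι F2) : Prop :=
  ∃ σ τ : Finset ι, Disjoint σ τ ∧ f = pm σ τ

/-- The canonical form of an ideal: the set of its minimal pseudo-monomials, i.e.
pseudo-monomials `f ∈ I` such that no pseudo-monomial `g ∈ I` of strictly smaller
degree divides `f`. -/
def CF {ι : Type*} (I : Ideal (MvPolynomial ι F2)) : Set (MvPolynomial ι F2) :=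
  {f | IsPseudoMonomial f ∧ f ∈ I ∧
    ¬ ∃ g : MvPolynomial ι F2, IsPseudoMonomial g ∧ g ∈ I ∧
      g.totalDegree < f.totalDegree ∧ g ∣ f}

/-- The polarization of the pseudo-monomial with data `(σ, τ)`:
`∏_{i ∈ σ} X i * ∏_{j ∈ τ} Y j` (here `Y j = X (Sum.inr j)`). -/
noncomputable def ppm {n : ℕ} (σ τ : Finset (Fin n)) : MvPolynomial (Fin n ⊕ Fin n) F2 :=
  (∏ i ∈ σ, X (Sum.inl i)) * ∏ j ∈ τ, X (Sum.inr j)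

/-- `g` is the polarization of the pseudo-monomial `f`. -/
def PolPM {n : ℕ} (f : MvPolynomial (Fin n) F2) (g : MvPolynomial (Fin n ⊕ Fin n) F2) : Prop :=
  ∃ σ τ : Finset (Fin n), Disjoint σ τ ∧ f = pm σ τ ∧ g = ppm σ τ

/-- The set of polarizations of the elements of a set of pseudo-monomials. -/
def polSet {n : ℕ} (S : Set (MvPolynomial (Fin n) F2)) :
    Set (MvPolynomial (Fin n ⊕ Fin n) F2) :=
  {g | ∃ f ∈ S, PolPM f g}

/-- The prime ideal of a motif: generated by `X i` for `a i = 0`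
and `1 - X j` for `a j = 1`. -/
noncomputable def pIdeal {ι : Type*} (a : Motif ι) : Ideal (MvPolynomial ι F2) :=
  Ideal.span ({f | ∃ i, a i = some 0 ∧ f = X i} ∪ {f | ∃ j, a j = some 1 ∧ f = 1 - X j})

/-! `bar (pol (bar b))` is the motif with a `1` at `inl i` where `b i = 1`, a `1` at `inr i` where
`b i = 0`, and `*` elsewhere. Its variety misses the variety of `pol a` exactly when `a` and `b`
clash at some coordinate, i.e. when `V_a ∩ V_b = ∅`. Since `C` is the union of the varieties of its
maximal motifs, `bar (pol (bar b))` is a motif of `ᶜ(Cᵖ)` iff `b` is a motif of `ᶜC`, which gives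
its maximality there. In `ᶜ(C^[p])`, a union of varieties of such all-`1` motifs, the word filling
the stars of a motif `c` with `0` lies in some `V_{bar (pol (bar b))}`, which forces
`c ≤ bar (pol (bar b))`; so the maximal motifs are exactly those of maximal `b`. -/

section Motifs

variable {ι : Type*}

lemma F2_eq_zero_or_eq_one (x : F2) : x = 0 ∨ x = 1 := by
  revert x; decide

lemma motifLE_refl (a : Motif ι) : MotifLE a a := fun _ _ h => h

lemma MotifLE.trans {a b c : Motif ι} (hab : MotifLE a b) (hbc : MotifLE b c) : MotifLE a c :=
  fun i x h => hab i x (hbc i x h)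

lemma MotifLE.eq_none {a b : Motif ι} (hab : MotifLE a b) {i : ι} (ha : a i = none) :
    b i = none := by
  rcases hb : b i with _ | x
  · rfl
  · simpa [ha] using hab i x hb

lemma MotifLE.antisymm {a b : Motif ι} (hab : MotifLE a b) (hba : MotifLE b a) : a = b := by
  funext i
  rcases hb : b i with _ | x
  · exact (hba.eq_none hb).symm ▸ rfl
  · exact hab i x hb

lemma MotifLE.variety_subset {a b : Motif ι} (hab : MotifLE a b) : variety a ⊆ variety b :=
  fun _ hw i x hx => hw i x (hab i x hx)

lemma mem_variety_wordMotif {u w : ι → F2} : w ∈ variety (wordMotif u) ↔ w = u :=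
  ⟨fun hw => funext fun i => hw i (u i) rfl, by rintro rfl i x hx; exact Option.some_inj.mp hx⟩

lemma disjoint_variety_iff {a b : Motif ι} :
    Disjoint (variety a) (variety b) ↔ DisjointMotifs a b := by
  constructor
  · intro hdisj
    by_contra hclash
    -- a word of `V_a` agreeing with `b` wherever `a` has a star
    let w : ι → F2 := fun i => (a i).getD ((b i).getD 0)
    have hwa : w ∈ variety a := fun i x hx => by simp [w, hx]
    have hwb : w ∈ variety b := by
      intro i y hy
      rcases ha : a i with _ | x
      · simp [w, ha, hy]
      · rcases F2_eq_zero_or_eq_one x with rfl | rfl <;>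
          rcases F2_eq_zero_or_eq_one y with rfl | rfl <;>
          first
          | exact (hclash ⟨i, _, ha, by rw [hy]; decide⟩).elim
          | simp [w, ha]
    exact Set.disjoint_left.mp hdisj hwa hwb
  · rintro ⟨i, x, ha, hb⟩
    refine Set.disjoint_left.mpr fun w hwa hwb => ?_
    have h := (hwa i x ha).symm.trans (hwb i _ hb)
    rcases F2_eq_zero_or_eq_one x with rfl | rfl <;> revert h <;> decide

def fillZero (c : Motif ι) : ι → F2 := fun i => (c i).getD 0

lemma fillZero_mem_variety (c : Motif ι) : fillZero c ∈ variety c :=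
  fun i x hx => by simp [fillZero, hx]

lemma motifLE_of_fillZero_mem_variety {c m : Motif ι} (hm : ∀ i x, m i = some x → x = 1)
    (h : fillZero c ∈ variety m) : MotifLE c m := by
  intro i x hx
  obtain rfl := hm i x hx
  have h1 := h i 1 hx
  rcases hc : c i with _ | y
  · simp [fillZero, hc] at h1
  · simpa [fillZero, hc] using h1

section Finite

variable [Fintype ι]

def starCount (b : Motif ι) : ℕ := (Finset.univ.filter fun i => b i = none).card

lemma MotifLE.starCount_lt {a b : Motif ι} (hab : MotifLE a b) (hne : a ≠ b) :
    starCount a < starCount b := by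
  obtain ⟨i, hi⟩ := Function.ne_iff.mp hne
  have hbi : b i = none := by
    rcases hb : b i with _ | y
    · rfl
    · exact absurd (hab i y hb) (hb ▸ hi)
  refine Finset.card_lt_card ((Finset.ssubset_iff_of_subset ?_).mpr ⟨i, ?_, ?_⟩)
  · intro j
    simpa using hab.eq_none
  · simpa using hbi
  · simpa [hbi] using hi

lemma exists_maxMot_ge {X : Set (ι → F2)} {m : Motif ι} (hm : IsMotifOf X m) :
    ∃ a ∈ maxMot X, MotifLE m a := by
  obtain ⟨a, ⟨haX, hma⟩, hmax⟩ := Set.Finite.exists_maximalFor (starCount (ι := ι))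
    {b | IsMotifOf X b ∧ MotifLE m b} (Set.toFinite _) ⟨m, hm, motifLE_refl m⟩
  refine ⟨a, ⟨haX, fun b hbX hab => ?_⟩, hma⟩
  by_contra hne
  have hlt := hab.starCount_lt hne
  exact hlt.not_ge (hmax ⟨hbX, hma.trans hab⟩ hlt.le)

lemma iUnion_variety_maxMot (X : Set (ι → F2)) : ⋃ a ∈ maxMot X, variety a = X := by
  refine subset_antisymm (Set.iUnion₂_subset fun a ha => ha.1) fun u hu => ?_
  have hmot : IsMotifOf X (wordMotif u) := fun w hw => mem_variety_wordMotif.mp hw ▸ hu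
  obtain ⟨a, ha, hua⟩ := exists_maxMot_ge hmot
  exact Set.mem_biUnion ha (hua.variety_subset (mem_variety_wordMotif.mpr rfl))

end Finite

end Motifs

section Polarization

open Sum

variable {n : ℕ}

def barPolBar (b : Motif (Fin n)) : Motif (Fin n ⊕ Fin n) :=
  barMotif (polMotif (barMotif b))

lemma barPolBar_inl (b : Motif (Fin n)) (i : Fin n) :
    barPolBar b (inl i) = if b i = some 1 then some 1 else none := by
  have key : ∀ o : Option F2, Option.map (fun x : F2 => 1 - x)
      (if Option.map (fun x : F2 => 1 - x) o = some 0 then some 0 else none) =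
      if o = some 1 then some 1 else none := by decide
  exact key (b i)

lemma barPolBar_inr (b : Motif (Fin n)) (i : Fin n) :
    barPolBar b (inr i) = if b i = some 0 then some 1 else none := by
  have key : ∀ o : Option F2, Option.map (fun x : F2 => 1 - x)
      (if Option.map (fun x : F2 => 1 - x) o = some 1 then some 0 else none) =
      if o = some 0 then some 1 else none := by decide
  exact key (b i)

lemma eq_one_of_barPolBar_eq_some {b : Motif (Fin n)} {k : Fin n ⊕ Fin n} {x : F2}
    (h : barPolBar b k = some x) : x = 1 := by
  rcases k with i | i <;> simp only [barPolBar_inl, barPolBar_inr] at h <;>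
    split_ifs at h <;> simp_all

lemma motifLE_of_barPolBar_le {b b' : Motif (Fin n)}
    (h : MotifLE (barPolBar b) (barPolBar b')) : MotifLE b b' := by
  intro i x hx
  rcases F2_eq_zero_or_eq_one x with rfl | rfl
  · simpa [barPolBar_inr, hx] using h (inr i) 1
  · simpa [barPolBar_inl, hx] using h (inl i) 1

/-- The witness stars `b` at each `i` where `c` has stars at both `inl i` and `inr i`. -/
lemma exists_barPolBar_eq_of_le {b : Motif (Fin n)} {c : Motif (Fin n ⊕ Fin n)}
    (h : MotifLE (barPolBar b) c) : ∃ b', MotifLE b b' ∧ c = barPolBar b' := by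
  refine ⟨fun i => if c (inl i) = none ∧ c (inr i) = none then none else b i,
    fun i x hx => ?_, funext fun k => ?_⟩
  · dsimp only at hx
    split_ifs at hx
    exact hx
  have key : ∀ p q o : Option F2,
      (∀ x, p = some x → (if o = some 1 then some 1 else none) = some x) →
      (∀ x, q = some x → (if o = some 0 then some 1 else none) = some x) →
      p = (if (if p = none ∧ q = none then none else o) = some 1 then some 1 else none) ∧
      q = (if (if p = none ∧ q = none then none else o) = some 0 then some 1 else none) := by
    decide
  rcases k with i | i
  · rw [barPolBar_inl]
    exact (key _ _ _ (by simpa [barPolBar_inl] using h (inl i))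
      (by simpa [barPolBar_inr] using h (inr i))).1
  · rw [barPolBar_inr]
    exact (key _ _ _ (by simpa [barPolBar_inl] using h (inl i))
      (by simpa [barPolBar_inr] using h (inr i))).2

lemma disjointMotifs_polMotif_barPolBar_iff {a b : Motif (Fin n)} :
    DisjointMotifs (polMotif a) (barPolBar b) ↔ DisjointMotifs a b := by
  constructor
  · rintro ⟨i | i, x, ha, hb⟩ <;>
      simp only [polMotif, barPolBar_inl, barPolBar_inr] at ha hb <;>
      split_ifs at ha hb with ha' hb' <;> simp only [Option.some_inj] at ha hb <;> subst ha
    · exact ⟨i, 0, ha', hb'⟩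
    · exact ⟨i, 1, ha', hb'⟩
  · rintro ⟨i, x, ha, hb⟩
    rcases F2_eq_zero_or_eq_one x with rfl | rfl
    · exact ⟨inl i, 0, by simp [polMotif, ha], by simpa [barPolBar_inl] using hb⟩
    · exact ⟨inr i, 0, by simp [polMotif, ha], by simpa [barPolBar_inr] using hb⟩

lemma isMotifOf_compl_polCode_barPolBar_iff {C : Set (Fin n → F2)} {b : Motif (Fin n)} :
    IsMotifOf (polCode C)ᶜ (barPolBar b) ↔ IsMotifOf Cᶜ b := by
  simp only [IsMotifOf, Set.subset_compl_iff_disjoint_left, polCode,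
    Set.disjoint_iUnion₂_left, disjoint_variety_iff, disjointMotifs_polMotif_barPolBar_iff]
  simp only [← disjoint_variety_iff, ← Set.disjoint_iUnion₂_left, iUnion_variety_maxMot]

lemma mem_barPolBarCode_iff {D : Set (Fin n → F2)} {w : Fin n ⊕ Fin n → F2} :
    w ∈ barPolBarCode D ↔ ∃ b ∈ maxMot D, w ∈ variety (barPolBar b) := by
  simp [barPolBarCode, barPolBar]

lemma barPolBar_isMotifOf_barPolBarCode {D : Set (Fin n → F2)} {b : Motif (Fin n)}
    (hb : b ∈ maxMot D) : IsMotifOf (barPolBarCode D) (barPolBar b) :=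
  fun _ hw => mem_barPolBarCode_iff.mpr ⟨b, hb, hw⟩

lemma exists_maxMot_le_barPolBar {D : Set (Fin n → F2)} {c : Motif (Fin n ⊕ Fin n)}
    (hc : IsMotifOf (barPolBarCode D) c) : ∃ b ∈ maxMot D, MotifLE c (barPolBar b) := by
  obtain ⟨b, hb, hw⟩ := mem_barPolBarCode_iff.mp (hc (fillZero_mem_variety c))
  exact ⟨b, hb, motifLE_of_fillZero_mem_variety (fun _ _ => eq_one_of_barPolBar_eq_some) hw⟩

lemma maxMot_barPolBarCode (D : Set (Fin n → F2)) :
    maxMot (barPolBarCode D) = barPolBar '' maxMot D := by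
  ext c
  constructor
  · rintro ⟨hc, hmax⟩
    obtain ⟨b, hb, hcb⟩ := exists_maxMot_le_barPolBar hc
    exact ⟨b, hb, (hmax _ (barPolBar_isMotifOf_barPolBarCode hb) hcb).symm⟩
  · rintro ⟨b, hb, rfl⟩
    refine ⟨barPolBar_isMotifOf_barPolBarCode hb, fun c hc hbc => ?_⟩
    obtain ⟨b', hb', hcb'⟩ := exists_maxMot_le_barPolBar hc
    obtain rfl : b = b' := hb.2 b' hb'.1 (motifLE_of_barPolBar_le (hbc.trans hcb'))
    exact hbc.antisymm hcb'

lemma barPolBar_mem_maxMot_compl_polCode {C : Set (Fin n → F2)} {b : Motif (Fin n)}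
    (hb : b ∈ maxMot Cᶜ) : barPolBar b ∈ maxMot (polCode C)ᶜ := by
  refine ⟨isMotifOf_compl_polCode_barPolBar_iff.mpr hb.1, fun c hc hbc => ?_⟩
  obtain ⟨b', hbb', rfl⟩ := exists_barPolBar_eq_of_le hbc
  rw [hb.2 b' (isMotifOf_compl_polCode_barPolBar_iff.mp hc) hbb']

end Polarization

/-- with `D = ᶜC`,
`MaxMot(ᶜ(C^[p])) = {bar((bar b)ᵖ) : b ∈ MaxMot D} ⊆ MaxMot(ᶜ(Cᵖ))`. -/
theorem maxMot_compl_formalPol {n : ℕ} (C D : Set (Fin n → F2)) (hD : D = Cᶜ) :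
    maxMot ((formalPol C)ᶜ) =
      (fun b : Motif (Fin n) => barMotif (polMotif (barMotif b))) '' maxMot D ∧
    maxMot ((formalPol C)ᶜ) ⊆ maxMot ((polCode C)ᶜ) := by
  have hmax : maxMot ((formalPol C)ᶜ) = barPolBar '' maxMot D := by
    rw [formalPol, compl_compl, ← hD, maxMot_barPolBarCode]
  refine ⟨hmax, ?_⟩
  rw [hmax, Set.image_subset_iff]
  intro b hb
  exact barPolBar_mem_maxMot_compl_polCode (hD ▸ hb)
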